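/- arXiv:2002.00874 — 7 statements merged into one kernel-verified Lean document; each statement's English description precedes it below -/
import Mathlib

section
/- Let f(x) = (1/2)‖x‖_c² and consider the generalized Moreau envelope M(x) = inf_{u ∈ ℝ^d} { f(u) + (1/(2μ))‖x−u‖_s² } for μ > 0, where ℓ‖·‖_c ≤ ‖·‖_s with ℓ ∈ (0,1]. Then for all x ∈ ℝ^d, M(x) ≥ (ℓ²/(μ+ℓ²)) f(x), i.e., f(x) ≤ (1 + μ/ℓ²) M(x). -/
/-- A function `n : ℝ^d → ℝ` is a norm. -/
structure IsNorm {d : ℕ} (n : (Fin d → ℝ) → ℝ) : Prop where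
  nonneg : ∀ x, 0 ≤ n x
  definite : ∀ x, n x = 0 → x = 0
  homog : ∀ (a : ℝ) (x), n (a • x) = |a| * n x
  triangle : ∀ x y, n (x + y) ≤ n x + n y

/-- lower bound for the generalized Moreau envelope,
    `M(x) ≥ (ℓ²/(μ+ℓ²)) f(x)` where `f(x) = ‖x‖_c²/2`. -/
theorem stmt_0 {d : ℕ} (nc ns : (Fin d → ℝ) → ℝ)
    (hnc : IsNorm nc) (hns : IsNorm ns)
    (μ ℓ : ℝ) (hμ : 0 < μ) (hℓ : ℓ ∈ Set.Ioc (0 : ℝ) 1)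
    (hle : ∀ x, ℓ * nc x ≤ ns x) :
    ∀ x : Fin d → ℝ,
      (⨅ u : Fin d → ℝ, ((nc u) ^ 2 / 2 + (ns (x - u)) ^ 2 / (2 * μ)))
        ≥ (ℓ ^ 2 / (μ + ℓ ^ 2)) * ((nc x) ^ 2 / 2) := by
  obtain ⟨hℓ0, hℓ1⟩ := hℓ
  intro x
  rw [ge_iff_le]
  apply le_ciInf
  intro u
  have htri : nc x ≤ nc u + nc (x - u) := by
    have := hnc.triangle u (x - u)
    simpa using this
  have hb : ℓ * nc (x - u) ≤ ns (x - u) := hle (x - u)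
  set a := nc u
  set b := ns (x - u)
  set c := nc x
  have ha : 0 ≤ a := hnc.nonneg u
  have hb0 : 0 ≤ b := hns.nonneg (x - u)
  have hc : 0 ≤ c := hnc.nonneg x
  have hcb : ℓ * c ≤ ℓ * a + b := by nlinarith
  have hden : 0 < μ + ℓ ^ 2 := by positivity
  rw [div_mul_eq_mul_div, div_le_iff₀ hden]
  have key : ℓ ^ 2 * (c ^ 2 / 2) ≤ ((ℓ * a + b) ^ 2) / 2 := by
    have h1 : (ℓ * c) ^ 2 ≤ (ℓ * a + b) ^ 2 :=
      pow_le_pow_left₀ (mul_nonneg hℓ0.le hc) hcb 2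
    nlinarith [h1]
  have hB : b ^ 2 = 2 * μ * (b ^ 2 / (2 * μ)) := by field_simp
  nlinarith [sq_nonneg (μ * a - ℓ * b), hB, key]
end

section
/- Let f(x) = (1/2)‖x‖_c² and M(x) = inf_{u ∈ ℝ^d} { f(u) + (1/(2μ))‖x−u‖_s² } for μ > 0, where ‖·‖_s ≤ u_{cs}‖·‖_c with u_{cs} ≥ 1. Then for all x ∈ ℝ^d, M(x) ≤ (u_{cs}²/(u_{cs}²+μ)) f(x), i.e., f(x) ≥ (1 + μ/u_{cs}²) M(x). -/
namespace IsNorm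

variable {d : ℕ} {n : (Fin d → ℝ) → ℝ}

theorem apply_smul_of_nonneg (hn : IsNorm n) {a : ℝ} (ha : 0 ≤ a) (x : Fin d → ℝ) :
    n (a • x) = a * n x := by
  rw [hn.homog, abs_of_nonneg ha]

theorem apply_sub_smul_of_le_one (hn : IsNorm n) {t : ℝ} (ht : t ≤ 1) (x : Fin d → ℝ) :
    n (x - t • x) = (1 - t) * n x := by
  rw [← hn.apply_smul_of_nonneg (sub_nonneg.2 ht), sub_smul, one_smul]

theorem sq_le_sq_mul_of_le (hn : IsNorm n) {m : (Fin d → ℝ) → ℝ} {k : ℝ}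
    (hle : ∀ x, n x ≤ k * m x) (x : Fin d → ℝ) : n x ^ 2 ≤ k ^ 2 * m x ^ 2 := by
  rw [← mul_pow]
  exact pow_le_pow_left₀ (hn.nonneg x) (hle x) 2

end IsNorm

theorem weighted_split_le {μ k c s : ℝ} (hμ : 0 < μ) (hs : s ^ 2 ≤ k ^ 2 * c ^ 2) :
    (k ^ 2 / (k ^ 2 + μ) * c) ^ 2 / 2 + (μ / (k ^ 2 + μ) * s) ^ 2 / (2 * μ)
      ≤ k ^ 2 / (k ^ 2 + μ) * (c ^ 2 / 2) := by
  have hden : 0 < k ^ 2 + μ := by positivity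
  calc (k ^ 2 / (k ^ 2 + μ) * c) ^ 2 / 2 + (μ / (k ^ 2 + μ) * s) ^ 2 / (2 * μ)
      = (k ^ 4 * c ^ 2 + μ * s ^ 2) / (2 * (k ^ 2 + μ) ^ 2) := by
        field_simp
    _ ≤ (k ^ 4 * c ^ 2 + μ * (k ^ 2 * c ^ 2)) / (2 * (k ^ 2 + μ) ^ 2) := by
        gcongr
    _ = k ^ 2 / (k ^ 2 + μ) * (c ^ 2 / 2) := by
        field_simp

theorem stmt_1_general {d : ℕ} (nc ns : (Fin d → ℝ) → ℝ)
    (hnc : IsNorm nc) (hns : IsNorm ns)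
    (μ ucs : ℝ) (hμ : 0 < μ)
    (hle : ∀ x, ns x ≤ ucs * nc x) :
    ∀ x : Fin d → ℝ,
      (⨅ u : Fin d → ℝ, ((nc u) ^ 2 / 2 + (ns (x - u)) ^ 2 / (2 * μ)))
        ≤ (ucs ^ 2 / (ucs ^ 2 + μ)) * ((nc x) ^ 2 / 2) := by
  intro x
  set t := ucs ^ 2 / (ucs ^ 2 + μ) with ht
  have ht1 : t ≤ 1 := div_le_one_of_le₀ (by linarith) (by positivity)
  have hcompl : 1 - t = μ / (ucs ^ 2 + μ) := by
    rw [ht]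
    field_simp
    ring
  have hbdd : BddBelow (Set.range fun u ↦ nc u ^ 2 / 2 + ns (x - u) ^ 2 / (2 * μ)) :=
    ⟨0, by rintro _ ⟨u, rfl⟩; positivity⟩
  calc (⨅ u, nc u ^ 2 / 2 + ns (x - u) ^ 2 / (2 * μ))
      ≤ nc (t • x) ^ 2 / 2 + ns (x - t • x) ^ 2 / (2 * μ) := ciInf_le hbdd (t • x)
    _ = (t * nc x) ^ 2 / 2 + (μ / (ucs ^ 2 + μ) * ns x) ^ 2 / (2 * μ) := by
        rw [hnc.apply_smul_of_nonneg (by positivity), hns.apply_sub_smul_of_le_one ht1, hcompl]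
    _ ≤ t * (nc x ^ 2 / 2) := weighted_split_le hμ (hns.sq_le_sq_mul_of_le hle x)

/-- upper bound for the generalized Moreau envelope,
    `M(x) ≤ (u_cs²/(u_cs²+μ)) f(x)` where `f(x) = ‖x‖_c²/2`. -/
theorem stmt_1 {d : ℕ} (nc ns : (Fin d → ℝ) → ℝ)
    (hnc : IsNorm nc) (hns : IsNorm ns)
    (μ ucs : ℝ) (hμ : 0 < μ) (hucs : 1 ≤ ucs)
    (hle : ∀ x, ns x ≤ ucs * nc x) :
    ∀ x : Fin d → ℝ,
      (⨅ u : Fin d → ℝ, ((nc u) ^ 2 / 2 + (ns (x - u)) ^ 2 / (2 * μ)))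
        ≤ (ucs ^ 2 / (ucs ^ 2 + μ)) * ((nc x) ^ 2 / 2) :=
  stmt_1_general nc ns hnc hns μ ucs hμ hle
end

section
/- Let f(x) = (1/2)‖x‖_c² and M(x) = inf_{u ∈ ℝ^d} { f(u) + (1/(2μ))‖x−u‖_s² } with μ > 0. Then √(2M(x)) defines a norm on ℝ^d; in particular, the subadditivity inequality √(M(x₁+x₂)) ≤ √(M(x₁)) + √(M(x₂)) holds for all x₁, x₂ ∈ ℝ^d. -/
/-- The generalized Moreau envelope of `f(x) = ‖x‖_c²/2` w.r.t. `g = ‖·‖_s²/2`. -/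
noncomputable def MoreauEnv {d : ℕ} (nc ns : (Fin d → ℝ) → ℝ) (μ : ℝ)
    (x : Fin d → ℝ) : ℝ :=
  ⨅ u : Fin d → ℝ, ((nc u) ^ 2 / 2 + (ns (x - u)) ^ 2 / (2 * μ))

lemma key_ineq (μ a b c e : ℝ) (hμ : 0 < μ) (ha : 0 ≤ a) (hb : 0 ≤ b)
    (hc : 0 ≤ c) (he : 0 ≤ e) :
    Real.sqrt ((a + b) ^ 2 / 2 + (c + e) ^ 2 / (2 * μ))
      ≤ Real.sqrt (a ^ 2 / 2 + c ^ 2 / (2 * μ))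
        + Real.sqrt (b ^ 2 / 2 + e ^ 2 / (2 * μ)) := by
  set A := a ^ 2 / 2 + c ^ 2 / (2 * μ) with hA
  set B := b ^ 2 / 2 + e ^ 2 / (2 * μ) with hB
  have hA0 : 0 ≤ A := by positivity
  have hB0 : 0 ≤ B := by positivity
  have hcross : a * b + c * e / μ ≤ 2 * Real.sqrt (A * B) := by
    have h1 : (a * b + c * e / μ) / 2 ≤ Real.sqrt (A * B) := by
      rw [show Real.sqrt (A * B) = Real.sqrt (A * B) from rfl]
      have hn : 0 ≤ (a * b + c * e / μ) / 2 := by positivity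
      rw [← Real.sqrt_sq hn]
      apply Real.sqrt_le_sqrt
      have hμ' : μ ≠ 0 := ne_of_gt hμ
      have hid : A * B = ((a * b + c * e / μ) / 2) ^ 2
          + (a * e - b * c) ^ 2 / (4 * μ) := by
        rw [hA, hB]; field_simp; ring
      have hpos : 0 ≤ (a * e - b * c) ^ 2 / (4 * μ) := by positivity
      linarith
    linarith
  have hsq : (a + b) ^ 2 / 2 + (c + e) ^ 2 / (2 * μ)
      ≤ (Real.sqrt A + Real.sqrt B) ^ 2 := by
    have hexp : (Real.sqrt A + Real.sqrt B) ^ 2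
        = A + B + 2 * Real.sqrt (A * B) := by
      rw [add_sq, Real.sq_sqrt hA0, Real.sq_sqrt hB0, Real.sqrt_mul hA0]
      ring
    rw [hexp, hA, hB]
    have : (a + b) ^ 2 / 2 + (c + e) ^ 2 / (2 * μ)
        = (a ^ 2 / 2 + c ^ 2 / (2 * μ)) + (b ^ 2 / 2 + e ^ 2 / (2 * μ))
          + (a * b + c * e / μ) := by
      field_simp
      ring
    linarith
  calc Real.sqrt ((a + b) ^ 2 / 2 + (c + e) ^ 2 / (2 * μ))
      ≤ Real.sqrt ((Real.sqrt A + Real.sqrt B) ^ 2) := Real.sqrt_le_sqrt hsq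
    _ = Real.sqrt A + Real.sqrt B := Real.sqrt_sq (by positivity)

/-- `√(M(·))` is subadditive:
    `√(M(x₁+x₂)) ≤ √(M(x₁)) + √(M(x₂))`. -/
theorem stmt_3 {d : ℕ} (nc ns : (Fin d → ℝ) → ℝ)
    (hnc : IsNorm nc) (hns : IsNorm ns)
    (μ : ℝ) (hμ : 0 < μ)
    (hattained : ∀ x : Fin d → ℝ, ∃ u : Fin d → ℝ,
      MoreauEnv nc ns μ x = (nc u) ^ 2 / 2 + (ns (x - u)) ^ 2 / (2 * μ)) :
    ∀ x₁ x₂ : Fin d → ℝ,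
      Real.sqrt (MoreauEnv nc ns μ (x₁ + x₂))
        ≤ Real.sqrt (MoreauEnv nc ns μ x₁) + Real.sqrt (MoreauEnv nc ns μ x₂) := by
  intro x₁ x₂
  obtain ⟨u₁, hu₁⟩ := hattained x₁
  obtain ⟨u₂, hu₂⟩ := hattained x₂
  set a := nc u₁ with ha'
  set b := nc u₂ with hb'
  set c := ns (x₁ - u₁) with hc'
  set e := ns (x₂ - u₂) with he'
  have ha : 0 ≤ a := hnc.nonneg _
  have hb : 0 ≤ b := hnc.nonneg _
  have hc : 0 ≤ c := hns.nonneg _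
  have he : 0 ≤ e := hns.nonneg _
  -- bound M(x₁+x₂) by value at u₁+u₂
  have hbdd : BddBelow (Set.range fun u : Fin d → ℝ =>
      (nc u) ^ 2 / 2 + (ns (x₁ + x₂ - u)) ^ 2 / (2 * μ)) := by
    refine ⟨0, ?_⟩
    rintro y ⟨u, rfl⟩
    have := hnc.nonneg u
    have := hns.nonneg (x₁ + x₂ - u)
    positivity
  have hle : MoreauEnv nc ns μ (x₁ + x₂)
      ≤ (nc (u₁ + u₂)) ^ 2 / 2 + (ns (x₁ + x₂ - (u₁ + u₂))) ^ 2 / (2 * μ) :=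
    ciInf_le hbdd (u₁ + u₂)
  have hsub : x₁ + x₂ - (u₁ + u₂) = (x₁ - u₁) + (x₂ - u₂) := by
    ext i; simp; ring
  have htri1 : nc (u₁ + u₂) ≤ a + b := hnc.triangle _ _
  have htri2 : ns (x₁ + x₂ - (u₁ + u₂)) ≤ c + e := by
    rw [hsub]; exact hns.triangle _ _
  have hle2 : MoreauEnv nc ns μ (x₁ + x₂)
      ≤ (a + b) ^ 2 / 2 + (c + e) ^ 2 / (2 * μ) := by
    refine hle.trans ?_
    have h1 : (nc (u₁ + u₂)) ^ 2 ≤ (a + b) ^ 2 := by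
      apply sq_le_sq' _ htri1
      nlinarith [hnc.nonneg (u₁ + u₂)]
    have h2 : (ns (x₁ + x₂ - (u₁ + u₂))) ^ 2 ≤ (c + e) ^ 2 := by
      apply sq_le_sq' _ htri2
      nlinarith [hns.nonneg (x₁ + x₂ - (u₁ + u₂))]
    have hμ2 : (0:ℝ) < 2 * μ := by linarith
    gcongr
  calc Real.sqrt (MoreauEnv nc ns μ (x₁ + x₂))
      ≤ Real.sqrt ((a + b) ^ 2 / 2 + (c + e) ^ 2 / (2 * μ)) :=
        Real.sqrt_le_sqrt hle2
    _ ≤ Real.sqrt (a ^ 2 / 2 + c ^ 2 / (2 * μ))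
        + Real.sqrt (b ^ 2 / 2 + e ^ 2 / (2 * μ)) :=
        key_ineq μ a b c e hμ ha hb hc he
    _ = Real.sqrt (MoreauEnv nc ns μ x₁) + Real.sqrt (MoreauEnv nc ns μ x₂) := by
        rw [hu₁, hu₂]
end

section
/- Let {x_k} be nonnegative reals satisfying x_{k+1} ≤ (1 − α ε_k) x_k + C ε_k² with ε_k = ε/(k+K), where αε = 1 and K ≥ 1 with ε_0 ≤ 1/α. Then for all k ≥ 0, x_k ≤ x_0 · K/(k+K) + (4C/α²) · log(k+K)/(k+K). -/
/-!
Writing `t = k + K`, the recursion reads `x_{k+1} ≤ (1 - 1/t) x_k + D/t²` with `D = C/α²`, and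
the claimed bound is `(x₀ K + 4 D log t)/t`. It is a supersolution of the recursion: the log
increment `log (t+1) - log t ≥ 1/(t+1)` pays for the noise term `D/t²`, and the factor `4`
absorbs `(t+1)² ≤ 4t²`, valid for `t ≥ 1`. Induction on `k` then closes the argument.
-/

open Real

lemma Real.inv_add_one_le_log_add_one_sub_log {t : ℝ} (ht : 0 < t) :
    (t + 1)⁻¹ ≤ log (t + 1) - log t := by
  have h := one_sub_inv_le_log_of_pos (x := (t + 1) / t) (by positivity)
  rw [log_div (by positivity) ht.ne'] at h
  calc (t + 1)⁻¹ = 1 - ((t + 1) / t)⁻¹ := by field_simp; ring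
    _ ≤ log (t + 1) - log t := h

lemma log_bound_step {a D t : ℝ} (ha : 0 ≤ a) (hD : 0 ≤ D) (ht : 1 ≤ t) :
    (1 - 1 / t) * ((a + 4 * D * log t) / t) + D / t ^ 2 ≤ (a + 4 * D * log (t + 1)) / (t + 1) := by
  have ht0 : 0 < t := one_pos.trans_le ht
  have hlog := Real.inv_add_one_le_log_add_one_sub_log ht0
  have hL : 0 ≤ log t := log_nonneg ht
  have hincr : t + 1 ≤ 4 * t ^ 2 * (log (t + 1) - log t) :=
    calc t + 1 = (t + 1) ^ 2 * (t + 1)⁻¹ := by field_simp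
      _ ≤ (t + 1) ^ 2 * (log (t + 1) - log t) := by gcongr
      _ ≤ 4 * t ^ 2 * (log (t + 1) - log t) := by
          gcongr
          · exact (inv_pos.2 (by positivity)).le.trans hlog
          · nlinarith
  calc (1 - 1 / t) * ((a + 4 * D * log t) / t) + D / t ^ 2
      = ((t ^ 2 - 1) * (a + 4 * D * log t) + D * (t + 1)) / (t ^ 2 * (t + 1)) := by
        field_simp; ring
    _ ≤ t ^ 2 * (a + 4 * D * log (t + 1)) / (t ^ 2 * (t + 1)) := by
        gcongr
        nlinarith [mul_le_mul_of_nonneg_left hincr hD, mul_nonneg hD hL]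
    _ = (a + 4 * D * log (t + 1)) / (t + 1) := by field_simp

lemma le_log_bound_of_rec (x : ℕ → ℝ) {D K : ℝ} (hD : 0 ≤ D) (hK : 1 ≤ K) (hx₀ : 0 ≤ x 0)
    (hrec : ∀ k : ℕ, x (k + 1) ≤ (1 - 1 / (k + K)) * x k + D / (k + K) ^ 2) (k : ℕ) :
    x k ≤ (x 0 * K + 4 * D * log (k + K)) / (k + K) := by
  induction k with
  | zero =>
    have hK0 : (0 : ℝ) < K := one_pos.trans_le hK
    rw [Nat.cast_zero, zero_add, add_div, mul_div_cancel_right₀ _ hK0.ne']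
    have := log_nonneg hK
    linarith [div_nonneg (mul_nonneg (mul_nonneg zero_le_four hD) this) hK0.le]
  | succ k ih =>
    have ht : (1 : ℝ) ≤ k + K := by linarith [(Nat.cast_nonneg k : (0 : ℝ) ≤ k)]
    have hcoef : 0 ≤ 1 - 1 / ((k : ℝ) + K) := sub_nonneg.2 ((div_le_one (by linarith)).2 ht)
    push_cast
    rw [add_right_comm]
    calc x (k + 1) ≤ (1 - 1 / (k + K)) * x k + D / (k + K) ^ 2 := hrec k
      _ ≤ (1 - 1 / (k + K)) * ((x 0 * K + 4 * D * log (k + K)) / (k + K)) + D / (k + K) ^ 2 := by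
          gcongr
      _ ≤ _ := log_bound_step (mul_nonneg hx₀ (by linarith)) hD ht

theorem stmt_7_general (x : ℕ → ℝ) (α C ε K : ℝ)
    (hC : 0 < C) (hε : α * ε = 1) (hK : 1 ≤ K)
    (hnonneg : ∀ k, 0 ≤ x k)
    (hrec : ∀ k : ℕ, x (k + 1) ≤ (1 - α * (ε / (k + K))) * x k + C * (ε / (k + K)) ^ 2) :
    ∀ k : ℕ, x k ≤ x 0 * (K / (k + K)) + (4 * C / α ^ 2) * Real.log (k + K) / (k + K) := by
  have hεα : ε = α⁻¹ := eq_inv_of_mul_eq_one_right hε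
  have hrec' : ∀ k : ℕ, x (k + 1) ≤ (1 - 1 / (k + K)) * x k + C / α ^ 2 / (k + K) ^ 2 := by
    intro k
    convert hrec k using 3
    · rw [← mul_div_assoc, hε]
    · rw [hεα, div_pow, inv_pow]; ring
  intro k
  convert le_log_bound_of_rec x (by positivity) hK (hnonneg 0) hrec' k using 1
  ring

/-- with stepsizes `ε_k = ε/(k+K)`, `αε = 1`, `K ≥ 1`, the recursion
    `x_{k+1} ≤ (1-αε_k)x_k + Cε_k²` yields
    `x_k ≤ x_0 K/(k+K) + (4C/α²) log(k+K)/(k+K)`. -/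
theorem stmt_7 (x : ℕ → ℝ) (α C ε K : ℝ)
    (hα : 0 < α) (hC : 0 < C) (hε : α * ε = 1) (hK : 1 ≤ K)
    (hnonneg : ∀ k, 0 ≤ x k)
    (hrec : ∀ k : ℕ, x (k + 1) ≤ (1 - α * (ε / (k + K))) * x k + C * (ε / (k + K)) ^ 2) :
    ∀ k : ℕ, x k ≤ x 0 * (K / (k + K)) + (4 * C / α ^ 2) * Real.log (k + K) / (k + K) :=
  stmt_7_general x α C ε K hC hε hK hnonneg hrec
end

section
/- For ξ ∈ (0,1), α, ε > 0, and K ≥ (2ξ/(αε))^{1/(1−ξ)}, the sequence defined by u_0 = 0 and u_{k+1} = (1 − α ε_k) u_k + ε_k² with ε_k = ε/(k+K)^ξ satisfies u_k ≤ (2ε/α) · 1/(k+K)^ξ for all k ≥ 0. -/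
/-!
Write `t = k + K` and `η = ε/t^ξ`, so the claimed bound is `u_k ≤ 2η/α`. Inductively,
`u_{k+1} ≤ (1 - αη)·2η/α + η² = 2η/α - η²`, so it suffices that the decrease
`(2ε/α)(1/t^ξ - 1/(t+1)^ξ)`, which Bernoulli's inequality bounds by `(2ε/α)·ξ/t^(ξ+1)`, is at
most `η²`. That is exactly the condition `2ξ/(αε) ≤ t^(1-ξ)`, which the lower bound on `K` gives.
-/

open Real

theorem one_div_rpow_sub_one_div_add_one_rpow_le {ξ t : ℝ} (ht : 0 < t) (hξ0 : 0 ≤ ξ)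
    (hξ1 : ξ ≤ 1) : 1 / t ^ ξ - 1 / (t + 1) ^ ξ ≤ ξ / t ^ (ξ + 1) := by
  have bernoulli : (t + 1) ^ ξ ≤ t ^ ξ * (1 + ξ / t) := by
    have hs : -1 ≤ 1 / t := by linarith [one_div_pos.mpr ht]
    calc (t + 1) ^ ξ = t ^ ξ * (1 + 1 / t) ^ ξ := by
          rw [← mul_rpow ht.le (by linarith), mul_add, mul_one_div_cancel ht.ne', mul_one]
      _ ≤ t ^ ξ * (1 + ξ * (1 / t)) := by
          gcongr; exact rpow_one_add_le_one_add_mul_self hs hξ0 hξ1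
      _ = t ^ ξ * (1 + ξ / t) := by rw [mul_one_div]
  calc 1 / t ^ ξ - 1 / (t + 1) ^ ξ ≤ 1 / t ^ ξ - 1 / (t ^ ξ * (1 + ξ / t)) := by
        gcongr
    _ = ξ / (t ^ ξ * (t + ξ)) := by field_simp; ring
    _ ≤ ξ / (t ^ ξ * t) := by gcongr; linarith
    _ = ξ / t ^ (ξ + 1) := by rw [rpow_add_one ht.ne']

theorem two_div_mul_div_rpow_add_one_le_sq {α ε ξ t : ℝ} (hα : 0 < α) (hε : 0 < ε)
    (ht : 0 < t) (hdrift : 2 * ξ / (α * ε) ≤ t ^ (1 - ξ)) :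
    2 * ε / α * (ξ / t ^ (ξ + 1)) ≤ (ε / t ^ ξ) ^ 2 := by
  calc 2 * ε / α * (ξ / t ^ (ξ + 1)) = ε ^ 2 * (2 * ξ / (α * ε)) / (t ^ ξ * t) := by
        rw [rpow_add_one ht.ne']; field_simp
    _ ≤ ε ^ 2 * t ^ (1 - ξ) / (t ^ ξ * t) := by gcongr
    _ = (ε / t ^ ξ) ^ 2 := by rw [rpow_sub ht, rpow_one]; field_simp

theorem step_le_two_div_mul_div_rpow_add_one {α ε ξ t u : ℝ} (hα : 0 < α) (hε : 0 < ε)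
    (hξ0 : 0 ≤ ξ) (hξ1 : ξ ≤ 1) (ht : 0 < t) (hdrift : 2 * ξ / (α * ε) ≤ t ^ (1 - ξ))
    (hstep : α * (ε / t ^ ξ) ≤ 1) (hu : u ≤ 2 * ε / α / t ^ ξ) :
    (1 - α * (ε / t ^ ξ)) * u + (ε / t ^ ξ) ^ 2 ≤ 2 * ε / α / (t + 1) ^ ξ := by
  have decrease : 2 * ε / α * (1 / t ^ ξ - 1 / (t + 1) ^ ξ) ≤ 2 * ε / α * (ξ / t ^ (ξ + 1)) := by
    gcongr; exact one_div_rpow_sub_one_div_add_one_rpow_le ht hξ0 hξ1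
  calc (1 - α * (ε / t ^ ξ)) * u + (ε / t ^ ξ) ^ 2
      ≤ (1 - α * (ε / t ^ ξ)) * (2 * ε / α / t ^ ξ) + (ε / t ^ ξ) ^ 2 := by
        gcongr
    _ = 2 * ε / α / t ^ ξ - (ε / t ^ ξ) ^ 2 := by field_simp; ring
    _ ≤ 2 * ε / α / t ^ ξ - 2 * ε / α * (ξ / t ^ (ξ + 1)) := by
        gcongr; exact two_div_mul_div_rpow_add_one_le_sq hα hε ht hdrift
    _ ≤ 2 * ε / α / (t + 1) ^ ξ := by
        rw [mul_sub, mul_one_div, mul_one_div] at decrease; linarith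

/-- with stepsizes `ε_k = ε/(k+K)^ξ`, `ξ ∈ (0,1)`,
    `K ≥ max(1, (2ξ/(αε))^{1/(1-ξ)})`, the sequence `u_0 = 0`,
    `u_{k+1} = (1-αε_k)u_k + ε_k²` satisfies `u_k ≤ (2ε/α)/(k+K)^ξ`. -/
theorem stmt_8 (α ε ξ K : ℝ) (hξ : ξ ∈ Set.Ioo (0 : ℝ) 1)
    (hα : 0 < α) (hε : 0 < ε)
    (hK1 : 1 ≤ K) (hK2 : (2 * ξ / (α * ε)) ^ ((1 : ℝ) / (1 - ξ)) ≤ K)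
    (hstep : ∀ k : ℕ, α * (ε / (k + K) ^ ξ) ≤ 1)
    (u : ℕ → ℝ) (hu0 : u 0 = 0)
    (hurec : ∀ k : ℕ,
      u (k + 1) = (1 - α * (ε / ((k : ℝ) + K) ^ ξ)) * u k + (ε / ((k : ℝ) + K) ^ ξ) ^ 2) :
    ∀ k : ℕ, u k ≤ (2 * ε / α) / ((k : ℝ) + K) ^ ξ := by
  obtain ⟨hξ0, hξ1⟩ := hξ
  have hK : 0 < K := by linarith
  have hdrift : 2 * ξ / (α * ε) ≤ K ^ (1 - ξ) := by
    rwa [one_div, rpow_inv_le_iff_of_pos (by positivity) hK.le (by linarith)] at hK2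
  intro k
  induction k with
  | zero => rw [hu0, Nat.cast_zero, zero_add]; positivity
  | succ k ih =>
    have ht : 0 < (k : ℝ) + K := by positivity
    rw [hurec k, Nat.cast_succ, add_right_comm]
    refine step_le_two_div_mul_div_rpow_add_one hα hε hξ0.le hξ1.le ht ?_ (hstep k) ih
    exact hdrift.trans (rpow_le_rpow hK.le (by linarith [k.cast_nonneg (α := ℝ)]) (by linarith))
end

section
/- Let P be a row-stochastic matrix with positive stationary distribution λ, β ∈ (0,1), R ∈ ℝ^{|S|}, and n ≥ 1. The n-step Bellman operator T_n(V) = βⁿPⁿV + ∑_{i=0}^{n−1} βⁱPⁱR is a βⁿ-contraction with respect to the weighted norm ‖·‖_Λ: ‖T_n(V₁) − T_n(V₂)‖_Λ ≤ βⁿ‖V₁ − V₂‖_Λ for all V₁, V₂. -/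
open Matrix

lemma one_step {S : Type*} [Fintype S]
    (P : Matrix S S ℝ) (hP0 : ∀ s s', 0 ≤ P s s')
    (hP1 : ∀ s, ∑ s', P s s' = 1)
    (lam : S → ℝ) (hlam0 : ∀ s, 0 < lam s)
    (hstat : ∀ s', ∑ s, lam s * P s s' = lam s') (V : S → ℝ) :
    ∑ s, lam s * ((P *ᵥ V) s) ^ 2 ≤ ∑ s, lam s * (V s) ^ 2 := by
  have key : ∀ s, ((P *ᵥ V) s) ^ 2 ≤ ∑ s', P s s' * (V s') ^ 2 := by
    intro s
    have h := Finset.sum_sq_le_sum_mul_sum_of_sq_eq_mul Finset.univ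
      (r := fun s' => P s s' * V s') (f := fun s' => P s s')
      (g := fun s' => P s s' * V s' ^ 2)
      (fun i _ => hP0 s i) (fun i _ => mul_nonneg (hP0 s i) (sq_nonneg _))
      (fun i _ => by ring)
    simpa [mulVec, dotProduct, hP1 s] using h
  calc ∑ s, lam s * ((P *ᵥ V) s) ^ 2
      ≤ ∑ s, lam s * ∑ s', P s s' * (V s') ^ 2 := by
        apply Finset.sum_le_sum
        intro s _
        exact mul_le_mul_of_nonneg_left (key s) (hlam0 s).le
    _ = ∑ s', (∑ s, lam s * P s s') * (V s') ^ 2 := by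
        simp_rw [Finset.mul_sum, ← mul_assoc]
        rw [Finset.sum_comm]
        simp_rw [← Finset.sum_mul]
    _ = ∑ s', lam s' * (V s') ^ 2 := by simp [hstat]

/-- the `n`-step Bellman operator
    `T_n(V) = βⁿPⁿV + ∑_{i<n} βⁱPⁱR` is a `βⁿ`-contraction in the weighted norm
    `‖V‖_Λ = (∑_s λ(s)V(s)²)^{1/2}`. -/
theorem stmt_15 {S : Type*} [Fintype S] [DecidableEq S]
    (P : Matrix S S ℝ) (hP0 : ∀ s s', 0 ≤ P s s')
    (hP1 : ∀ s, ∑ s', P s s' = 1)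
    (lam : S → ℝ) (hlam0 : ∀ s, 0 < lam s) (hlam1 : ∑ s, lam s = 1)
    (hstat : ∀ s', ∑ s, lam s * P s s' = lam s')
    (β : ℝ) (hβ : β ∈ Set.Ioo (0 : ℝ) 1) (R : S → ℝ)
    (n : ℕ) (hn : 1 ≤ n)
    (Tn : (S → ℝ) → (S → ℝ))
    (hTn : ∀ V, Tn V = β ^ n • ((P ^ n) *ᵥ V)
      + ∑ i ∈ Finset.range n, β ^ i • ((P ^ i) *ᵥ R)) :
    ∀ V₁ V₂ : S → ℝ,
      Real.sqrt (∑ s, lam s * ((Tn V₁ - Tn V₂) s) ^ 2)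
        ≤ β ^ n * Real.sqrt (∑ s, lam s * ((V₁ - V₂) s) ^ 2) := by
  intro V₁ V₂
  have hdiff : Tn V₁ - Tn V₂ = β ^ n • ((P ^ n) *ᵥ (V₁ - V₂)) := by
    rw [hTn, hTn]
    funext s
    simp [mulVec_sub, mul_sub]
  have hpow : ∀ m (V : S → ℝ),
      ∑ s, lam s * (((P ^ m) *ᵥ V) s) ^ 2 ≤ ∑ s, lam s * (V s) ^ 2 := by
    intro m
    induction m with
    | zero => intro V; simp
    | succ k ih =>
        intro V
        have : (P ^ (k+1)) *ᵥ V = P *ᵥ ((P ^ k) *ᵥ V) := by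
          rw [pow_succ', ← mulVec_mulVec]
        rw [this]
        exact le_trans (one_step P hP0 hP1 lam hlam0 hstat _) (ih V)
  rw [hdiff]
  have hβn : (0:ℝ) ≤ β ^ n := pow_nonneg hβ.1.le n
  have : ∑ s, lam s * ((β ^ n • ((P ^ n) *ᵥ (V₁ - V₂))) s) ^ 2
      = (β ^ n) ^ 2 * ∑ s, lam s * (((P ^ n) *ᵥ (V₁ - V₂)) s) ^ 2 := by
    rw [Finset.mul_sum]; congr 1; funext s; simp [Pi.smul_apply, smul_eq_mul]; ring
  rw [this, Real.sqrt_mul (sq_nonneg _), Real.sqrt_sq hβn]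
  exact mul_le_mul_of_nonneg_left
    (Real.sqrt_le_sqrt (hpow n (V₁ - V₂))) hβn
end

section
/- Let π₁, π₂ be stationary policies on a finite MDP with rewards R(s,a) ∈ [0,1] and discount β ∈ (0,1), and let V_{π₁}, V_{π₂} be the unique solutions of V_π = R_π + βP_πV_π. Then ‖V_{π₁} − V_{π₂}‖_∞ ≤ (2/(1−β)²)·max_s ∑_a |π₁(a|s) − π₂(a|s)|. -/
open Matrix

/-- Lipschitz continuity of the value function in the policy:
    `‖V_{π₁} - V_{π₂}‖_∞ ≤ (2/(1-β)²) max_s ∑_a |π₁(a|s) - π₂(a|s)|`,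
    where each `V_{πᵢ}` solves the Bellman equation `V = R_π + β P_π V`. -/
theorem stmt_17 {S A : Type*} [Fintype S] [Fintype A] [Nonempty S] [Nonempty A]
    (R : S → A → ℝ) (hR : ∀ s a, R s a ∈ Set.Icc (0 : ℝ) 1)
    (P : A → Matrix S S ℝ)
    (hP0 : ∀ a s s', 0 ≤ P a s s') (hP1 : ∀ a s, ∑ s', P a s s' = 1)
    (β : ℝ) (hβ : β ∈ Set.Ioo (0 : ℝ) 1)
    (π₁ π₂ : S → A → ℝ)
    (hπ₁0 : ∀ s a, 0 ≤ π₁ s a) (hπ₁1 : ∀ s, ∑ a, π₁ s a = 1)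
    (hπ₂0 : ∀ s a, 0 ≤ π₂ s a) (hπ₂1 : ∀ s, ∑ a, π₂ s a = 1)
    (V₁ V₂ : S → ℝ)
    (hV₁ : ∀ s, V₁ s = (∑ a, π₁ s a * R s a) + β * ∑ s', (∑ a, π₁ s a * P a s s') * V₁ s')
    (hV₂ : ∀ s, V₂ s = (∑ a, π₂ s a * R s a) + β * ∑ s', (∑ a, π₂ s a * P a s s') * V₂ s') :
    (⨆ s, |V₁ s - V₂ s|)
      ≤ (2 / (1 - β) ^ 2) * ⨆ s, ∑ a, |π₁ s a - π₂ s a| := by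
  obtain ⟨hβ0, hβ1⟩ := hβ
  have h1β : (0:ℝ) < 1 - β := by linarith
  set Δ := ⨆ s, ∑ a, |π₁ s a - π₂ s a| with hΔdef
  have hΔ : ∀ s, ∑ a, |π₁ s a - π₂ s a| ≤ Δ := fun s =>
    le_ciSup (f := fun s => ∑ a, |π₁ s a - π₂ s a|) (Set.Finite.bddAbove (Set.finite_range _)) s
  have hΔ0 : 0 ≤ Δ := le_trans (Finset.sum_nonneg fun a _ => abs_nonneg _)
    (hΔ (Classical.arbitrary S))
  -- bound on V₁
  have hVb : ∀ s, |V₁ s| ≤ 1 / (1 - β) := by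
    obtain ⟨s₁, hs₁⟩ := Finite.exists_max (fun s => |V₁ s|)
    have key : |V₁ s₁| ≤ 1 + β * |V₁ s₁| := by
      calc |V₁ s₁| = |(∑ a, π₁ s₁ a * R s₁ a) +
          β * ∑ s', (∑ a, π₁ s₁ a * P a s₁ s') * V₁ s'| := by rw [← hV₁]
        _ ≤ |∑ a, π₁ s₁ a * R s₁ a| +
            |β * ∑ s', (∑ a, π₁ s₁ a * P a s₁ s') * V₁ s'| := abs_add_le _ _
        _ ≤ 1 + β * |V₁ s₁| := by
            have h1 : |∑ a, π₁ s₁ a * R s₁ a| ≤ 1 := by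
              rw [abs_of_nonneg (Finset.sum_nonneg fun a _ =>
                mul_nonneg (hπ₁0 _ _) (hR s₁ a).1)]
              calc ∑ a, π₁ s₁ a * R s₁ a ≤ ∑ a, π₁ s₁ a * 1 :=
                    Finset.sum_le_sum fun a _ =>
                      mul_le_mul_of_nonneg_left (hR s₁ a).2 (hπ₁0 _ _)
                _ = 1 := by simp [hπ₁1 s₁]
            have h2 : |β * ∑ s', (∑ a, π₁ s₁ a * P a s₁ s') * V₁ s'| ≤ β * |V₁ s₁| := by
              rw [abs_mul, abs_of_nonneg hβ0.le]
              refine mul_le_mul_of_nonneg_left ?_ hβ0.le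
              calc |∑ s', (∑ a, π₁ s₁ a * P a s₁ s') * V₁ s'|
                  ≤ ∑ s', |(∑ a, π₁ s₁ a * P a s₁ s') * V₁ s'| :=
                    Finset.abs_sum_le_sum_abs _ _
                _ ≤ ∑ s', (∑ a, π₁ s₁ a * P a s₁ s') * |V₁ s₁| := by
                    refine Finset.sum_le_sum fun s' _ => ?_
                    rw [abs_mul, abs_of_nonneg (Finset.sum_nonneg fun a _ =>
                      mul_nonneg (hπ₁0 _ _) (hP0 a s₁ s'))]
                    exact mul_le_mul_of_nonneg_left (hs₁ s')
                      (Finset.sum_nonneg fun a _ => mul_nonneg (hπ₁0 _ _) (hP0 a s₁ s'))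
                _ = |V₁ s₁| := by
                    rw [← Finset.sum_mul]
                    rw [Finset.sum_comm]
                    simp_rw [← Finset.mul_sum, hP1, mul_one, hπ₁1 s₁, one_mul]
            linarith
    have hb : |V₁ s₁| ≤ 1 / (1 - β) := by
      rw [le_div_iff₀ h1β]; nlinarith
    exact fun s => le_trans (hs₁ s) hb
  -- max of the value difference
  obtain ⟨s₀, hs₀⟩ := Finite.exists_max (fun s => |V₁ s - V₂ s|)
  set D := |V₁ s₀ - V₂ s₀| with hDdef
  have hdecomp : V₁ s₀ - V₂ s₀ = (∑ a, (π₁ s₀ a - π₂ s₀ a) * R s₀ a) +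
      β * ((∑ s', (∑ a, (π₁ s₀ a - π₂ s₀ a) * P a s₀ s') * V₁ s') +
        (∑ s', (∑ a, π₂ s₀ a * P a s₀ s') * (V₁ s' - V₂ s'))) := by
    rw [hV₁ s₀, hV₂ s₀]
    simp only [sub_mul, mul_sub, Finset.sum_sub_distrib]
    ring
  have hT1 : |∑ a, (π₁ s₀ a - π₂ s₀ a) * R s₀ a| ≤ Δ := by
    calc |∑ a, (π₁ s₀ a - π₂ s₀ a) * R s₀ a|
        ≤ ∑ a, |(π₁ s₀ a - π₂ s₀ a) * R s₀ a| := Finset.abs_sum_le_sum_abs _ _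
      _ ≤ ∑ a, |π₁ s₀ a - π₂ s₀ a| := by
          refine Finset.sum_le_sum fun a _ => ?_
          rw [abs_mul]
          nth_rewrite 2 [show |π₁ s₀ a - π₂ s₀ a| = |π₁ s₀ a - π₂ s₀ a| * 1 from (mul_one _).symm]
          refine mul_le_mul_of_nonneg_left ?_ (abs_nonneg _)
          rw [abs_of_nonneg (hR s₀ a).1]; exact (hR s₀ a).2
      _ ≤ Δ := hΔ s₀
  have hT2 : |∑ s', (∑ a, (π₁ s₀ a - π₂ s₀ a) * P a s₀ s') * V₁ s'| ≤ Δ * (1 / (1 - β)) := by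
    calc |∑ s', (∑ a, (π₁ s₀ a - π₂ s₀ a) * P a s₀ s') * V₁ s'|
        ≤ ∑ s', |(∑ a, (π₁ s₀ a - π₂ s₀ a) * P a s₀ s') * V₁ s'| :=
          Finset.abs_sum_le_sum_abs _ _
      _ ≤ ∑ s', (∑ a, |π₁ s₀ a - π₂ s₀ a| * P a s₀ s') * (1 / (1 - β)) := by
          refine Finset.sum_le_sum fun s' _ => ?_
          rw [abs_mul]
          refine mul_le_mul ?_ (hVb s') (abs_nonneg _)
            (Finset.sum_nonneg fun a _ => mul_nonneg (abs_nonneg _) (hP0 a s₀ s'))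
          calc |∑ a, (π₁ s₀ a - π₂ s₀ a) * P a s₀ s'|
              ≤ ∑ a, |(π₁ s₀ a - π₂ s₀ a) * P a s₀ s'| := Finset.abs_sum_le_sum_abs _ _
            _ = ∑ a, |π₁ s₀ a - π₂ s₀ a| * P a s₀ s' := by
                refine Finset.sum_congr rfl fun a _ => ?_
                rw [abs_mul, abs_of_nonneg (hP0 a s₀ s')]
      _ = (∑ a, |π₁ s₀ a - π₂ s₀ a|) * (1 / (1 - β)) := by
          rw [← Finset.sum_mul, Finset.sum_comm]
          simp_rw [← Finset.mul_sum, hP1, mul_one]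
      _ ≤ Δ * (1 / (1 - β)) := by
          exact mul_le_mul_of_nonneg_right (hΔ s₀) (by positivity)
  have hT3 : |∑ s', (∑ a, π₂ s₀ a * P a s₀ s') * (V₁ s' - V₂ s')| ≤ D := by
    calc |∑ s', (∑ a, π₂ s₀ a * P a s₀ s') * (V₁ s' - V₂ s')|
        ≤ ∑ s', |(∑ a, π₂ s₀ a * P a s₀ s') * (V₁ s' - V₂ s')| :=
          Finset.abs_sum_le_sum_abs _ _
      _ ≤ ∑ s', (∑ a, π₂ s₀ a * P a s₀ s') * D := by
          refine Finset.sum_le_sum fun s' _ => ?_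
          rw [abs_mul, abs_of_nonneg (Finset.sum_nonneg fun a _ =>
            mul_nonneg (hπ₂0 _ _) (hP0 a s₀ s'))]
          exact mul_le_mul_of_nonneg_left (hs₀ s')
            (Finset.sum_nonneg fun a _ => mul_nonneg (hπ₂0 _ _) (hP0 a s₀ s'))
      _ = D := by
          rw [← Finset.sum_mul, Finset.sum_comm]
          simp_rw [← Finset.mul_sum, hP1, mul_one, hπ₂1 s₀, one_mul]
  have hDle : D ≤ Δ + β * (Δ * (1 / (1 - β)) + D) := by
    calc D = |V₁ s₀ - V₂ s₀| := rfl
      _ ≤ |∑ a, (π₁ s₀ a - π₂ s₀ a) * R s₀ a| +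
          |β * ((∑ s', (∑ a, (π₁ s₀ a - π₂ s₀ a) * P a s₀ s') * V₁ s') +
            (∑ s', (∑ a, π₂ s₀ a * P a s₀ s') * (V₁ s' - V₂ s')))| := by
          rw [hdecomp]; exact abs_add_le _ _
      _ ≤ Δ + β * (Δ * (1 / (1 - β)) + D) := by
          refine add_le_add hT1 ?_
          rw [abs_mul, abs_of_nonneg hβ0.le]
          exact mul_le_mul_of_nonneg_left
            (le_trans (abs_add_le _ _) (add_le_add hT2 hT3)) hβ0.le
  have hDfinal : D ≤ (2 / (1 - β) ^ 2) * Δ := by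
    have h1 : (1 - β) * D ≤ Δ / (1 - β) := by
      have heq : Δ + β * (Δ * (1 / (1 - β))) = Δ / (1 - β) := by field_simp; ring
      nlinarith [hDle, heq]
    rw [div_mul_eq_mul_div, le_div_iff₀ (by positivity)]
    have h2 : D * (1 - β) ^ 2 ≤ Δ := by
      have := (mul_le_mul_of_nonneg_left h1 h1β.le)
      calc D * (1 - β) ^ 2 = (1 - β) * ((1 - β) * D) := by ring
        _ ≤ (1 - β) * (Δ / (1 - β)) := mul_le_mul_of_nonneg_left h1 h1β.le
        _ = Δ := by field_simp
    linarith
  exact ciSup_le fun s => le_trans (hs₀ s) hDfinal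
end
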